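/- Let X be a real m×p matrix and let d_max > 0 be the largest eigenvalue of (1/m)XᵀX. Let σ² > 0 and ε > 0. If β⁰, β ∈ ℝ^p satisfy |β⁰_k − β_k| < √(2σ²ε/(m·p·d_max)) for every coordinate k = 1,…,p, then KL(N(Xβ⁰, σ²I_m) ‖ N(Xβ, σ²I_m)) < ε, and the variance under y ∼ N(Xβ⁰, σ²I_m) of the log-likelihood ratio of the two densities is strictly less than 2ε. -/

import Mathlib

/-!
The density of `N(μ, σ²I_m)` is the product of the one-dimensional densities `φ_{μ_i}`, so the
measure is the product of the `N(μ_i, σ²)` and the log-likelihood ratio is a sum of independent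
terms `log (φ_a / φ_b) (t) = (a - b) t / σ² + (b² - a²) / (2σ²)`, affine in one coordinate each.
Hence its mean is `‖μ⁰ - μ‖² / (2σ²)` and its variance `‖μ⁰ - μ‖² / σ²`. For `μ⁰ - μ = Xδ` with
`δ = β⁰ - β`, the Rayleigh bound `‖Xδ‖² ≤ m d_max ‖δ‖²` and `‖δ‖² < p · 2σ²ε / (m p d_max)` give
`‖μ⁰ - μ‖² < 2σ²ε`.
-/

open MeasureTheory Matrix

/-- The Lebesgue density of the Gaussian measure `N(μ, σ²I_m)` on `ℝ^m`. -/
noncomputable def gaussDensity (m : ℕ) (μ : Fin m → ℝ) (σ2 : ℝ) (y : Fin m → ℝ) : ℝ :=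
  (2 * Real.pi * σ2) ^ (-(m : ℝ) / 2) * Real.exp (-(∑ i, (y i - μ i) ^ 2) / (2 * σ2))

/-- The Gaussian probability measure `N(μ, σ²I_m)` on `ℝ^m`, given by its density
with respect to Lebesgue measure. -/
noncomputable def gaussMeasure (m : ℕ) (μ : Fin m → ℝ) (σ2 : ℝ) : Measure (Fin m → ℝ) :=
  volume.withDensity fun y => ENNReal.ofReal (gaussDensity m μ σ2 y)

open ProbabilityTheory
open scoped NNReal MatrixOrder

theorem MeasureTheory.Measure.pi_withDensity_ofReal {ι : Type*} [Fintype ι] {α : ι → Type*}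
    [∀ i, MeasurableSpace (α i)] {μ : ∀ i, Measure (α i)} [∀ i, SigmaFinite (μ i)]
    {f : ∀ i, α i → ℝ} (hf_nonneg : ∀ i x, 0 ≤ f i x) (hf : ∀ i, Integrable (f i) (μ i)) :
    Measure.pi (fun i ↦ (μ i).withDensity fun x ↦ ENNReal.ofReal (f i x)) =
      (Measure.pi μ).withDensity fun x ↦ ENNReal.ofReal (∏ i, f i (x i)) := by
  have := fun i ↦ isFiniteMeasure_withDensity_ofReal (hf i).2
  have hf_restrict : ∀ (s : ∀ i, Set (α i)) i, Integrable (f i) ((μ i).restrict (s i)) :=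
    fun s i ↦ (hf i).restrict
  refine Measure.pi_eq fun s hs ↦ ?_
  rw [withDensity_apply _ (MeasurableSet.univ_pi hs), Measure.restrict_pi_pi,
    ← ofReal_integral_eq_lintegral_ofReal (Integrable.fintype_prod_dep (hf_restrict s))
      (ae_of_all _ fun x ↦ Finset.prod_nonneg fun i _ ↦ hf_nonneg i (x i)),
    integral_fintype_prod_eq_prod,
    ENNReal.ofReal_prod_of_nonneg fun i _ ↦ integral_nonneg (hf_nonneg i)]
  refine Finset.prod_congr rfl fun i _ ↦ ?_
  rw [withDensity_apply _ (hs i),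
    ofReal_integral_eq_lintegral_ofReal (hf_restrict s i) (ae_of_all _ (hf_nonneg i))]

theorem MeasureTheory.integral_sum_comp_eval {ι : Type*} [Fintype ι] {α : ι → Type*}
    [∀ i, MeasurableSpace (α i)] {μ : ∀ i, Measure (α i)} [∀ i, IsProbabilityMeasure (μ i)]
    {f : ∀ i, α i → ℝ} (hf : ∀ i, Integrable (f i) (μ i)) :
    ∫ x, ∑ i, f i (x i) ∂Measure.pi μ = ∑ i, ∫ t, f i t ∂μ i := by
  rw [integral_finsetSum _ fun i _ ↦ integrable_comp_eval (hf i)]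
  exact Finset.sum_congr rfl fun i _ ↦ integral_comp_eval (hf i).aestronglyMeasurable

lemma gaussDensity_eq_prod {m : ℕ} {σ2 : ℝ} (hσ2 : 0 ≤ σ2) (μ y : Fin m → ℝ) :
    gaussDensity m μ σ2 y = ∏ i, gaussianPDFReal (μ i) σ2.toNNReal (y i) := by
  have h2πσ2 : 0 ≤ 2 * Real.pi * σ2 := by positivity
  simp only [gaussDensity, gaussianPDFReal]
  rw [Finset.prod_mul_distrib, Finset.prod_const,
    Finset.card_univ, Fintype.card_fin, ← Real.exp_sum, Real.coe_toNNReal _ hσ2,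
    Real.sqrt_eq_rpow, ← Real.rpow_neg h2πσ2, ← Real.rpow_mul_natCast h2πσ2, ← Finset.sum_div,
    Finset.sum_neg_distrib]
  congr 2
  ring

lemma gaussMeasure_eq_pi {m : ℕ} {σ2 : ℝ} (hσ2 : 0 < σ2) (μ : Fin m → ℝ) :
    gaussMeasure m μ σ2 = Measure.pi fun i ↦ gaussianReal (μ i) σ2.toNNReal := by
  have hv : σ2.toNNReal ≠ 0 := by simpa using hσ2
  simp_rw [gaussianReal_of_var_ne_zero _ hv, gaussianPDF_def]
  rw [Measure.pi_withDensity_ofReal (fun i ↦ gaussianPDFReal_nonneg (μ i) _)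
    (fun i ↦ integrable_gaussianPDFReal (μ i) _), gaussMeasure, volume_pi]
  simp_rw [gaussDensity_eq_prod hσ2.le]

lemma log_gaussianPDFReal_div {v : ℝ≥0} (hv : v ≠ 0) (a b t : ℝ) :
    Real.log (gaussianPDFReal a v t / gaussianPDFReal b v t) =
      (a - b) / v * t + (b ^ 2 - a ^ 2) / (2 * v) := by
  have hv' : (v : ℝ) ≠ 0 := by exact_mod_cast hv
  rw [gaussianPDFReal, gaussianPDFReal, mul_div_mul_left _ _ (by positivity), ← Real.exp_sub,
    Real.log_exp]
  field_simp
  ring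

lemma log_gaussDensity_div {m : ℕ} {σ2 : ℝ} (hσ2 : 0 < σ2) (μ0 μ1 y : Fin m → ℝ) :
    Real.log (gaussDensity m μ0 σ2 y / gaussDensity m μ1 σ2 y) =
      ∑ i, Real.log (gaussianPDFReal (μ0 i) σ2.toNNReal (y i) /
        gaussianPDFReal (μ1 i) σ2.toNNReal (y i)) := by
  have hv : σ2.toNNReal ≠ 0 := by simpa using hσ2
  rw [gaussDensity_eq_prod hσ2.le, gaussDensity_eq_prod hσ2.le, ← Finset.prod_div_distrib,
    Real.log_prod]
  exact fun i _ ↦ (div_pos (gaussianPDFReal_pos _ _ _ hv) (gaussianPDFReal_pos _ _ _ hv)).ne'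

lemma integral_affine_gaussianReal (a : ℝ) (v : ℝ≥0) (c d : ℝ) :
    ∫ t, c * t + d ∂gaussianReal a v = c * a + d := by
  have hid : Integrable (fun t : ℝ ↦ t) (gaussianReal a v) :=
    (memLp_id_gaussianReal 1).integrable le_rfl
  rw [integral_add (hid.const_mul c) (integrable_const d),
    integral_const_mul, integral_id_gaussianReal]
  simp

lemma variance_affine_gaussianReal (a : ℝ) (v : ℝ≥0) (c d : ℝ) :
    Var[fun t ↦ c * t + d; gaussianReal a v] = c ^ 2 * v := by
  rw [variance_add_const (by fun_prop), variance_const_mul, variance_fun_id_gaussianReal]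

lemma memLp_log_gaussianPDFReal_div {v : ℝ≥0} (hv : v ≠ 0) (a b c : ℝ) :
    MemLp (fun t ↦ Real.log (gaussianPDFReal a v t / gaussianPDFReal b v t)) 2
      (gaussianReal c v) := by
  simp_rw [log_gaussianPDFReal_div hv]
  exact ((memLp_id_gaussianReal 2).const_mul _).add (memLp_const _)

lemma integral_log_gaussianPDFReal_div {v : ℝ≥0} (hv : v ≠ 0) (a b : ℝ) :
    ∫ t, Real.log (gaussianPDFReal a v t / gaussianPDFReal b v t) ∂gaussianReal a v =
      (a - b) ^ 2 / (2 * v) := by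
  have hv' : (v : ℝ) ≠ 0 := by exact_mod_cast hv
  simp_rw [log_gaussianPDFReal_div hv, integral_affine_gaussianReal]
  field_simp
  ring

lemma variance_log_gaussianPDFReal_div {v : ℝ≥0} (hv : v ≠ 0) (a b : ℝ) :
    Var[fun t ↦ Real.log (gaussianPDFReal a v t / gaussianPDFReal b v t); gaussianReal a v] =
      (a - b) ^ 2 / v := by
  have hv' : (v : ℝ) ≠ 0 := by exact_mod_cast hv
  simp_rw [log_gaussianPDFReal_div hv, variance_affine_gaussianReal]
  field_simp

theorem integral_log_gaussDensity_div {m : ℕ} {σ2 : ℝ} (hσ2 : 0 < σ2) (μ0 μ1 : Fin m → ℝ) :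
    ∫ y, Real.log (gaussDensity m μ0 σ2 y / gaussDensity m μ1 σ2 y) ∂gaussMeasure m μ0 σ2 =
      (∑ i, (μ0 i - μ1 i) ^ 2) / (2 * σ2) := by
  have hv : σ2.toNNReal ≠ 0 := by simpa using hσ2
  simp_rw [log_gaussDensity_div hσ2, gaussMeasure_eq_pi hσ2]
  rw [integral_sum_comp_eval fun i ↦
    (memLp_log_gaussianPDFReal_div hv (μ0 i) (μ1 i) (μ0 i)).integrable one_le_two]
  simp_rw [integral_log_gaussianPDFReal_div hv, Real.coe_toNNReal _ hσ2.le, Finset.sum_div]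

theorem variance_log_gaussDensity_div {m : ℕ} {σ2 : ℝ} (hσ2 : 0 < σ2) (μ0 μ1 : Fin m → ℝ) :
    Var[fun y ↦ Real.log (gaussDensity m μ0 σ2 y / gaussDensity m μ1 σ2 y);
      gaussMeasure m μ0 σ2] = (∑ i, (μ0 i - μ1 i) ^ 2) / σ2 := by
  have hv : σ2.toNNReal ≠ 0 := by simpa using hσ2
  have hsum : (fun y ↦ Real.log (gaussDensity m μ0 σ2 y / gaussDensity m μ1 σ2 y)) =
      ∑ i, fun y ↦ Real.log (gaussianPDFReal (μ0 i) σ2.toNNReal (y i) /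
        gaussianPDFReal (μ1 i) σ2.toNNReal (y i)) := by
    ext y
    rw [log_gaussDensity_div hσ2, Finset.sum_apply]
  rw [hsum, gaussMeasure_eq_pi hσ2,
    variance_sum_pi fun i ↦ memLp_log_gaussianPDFReal_div hv (μ0 i) (μ1 i) (μ0 i)]
  simp_rw [variance_log_gaussianPDFReal_div hv, Real.coe_toNNReal _ hσ2.le, Finset.sum_div]

theorem Matrix.dotProduct_mulVec_le_of_eigenvalues_le {n : Type*} [Fintype n] [DecidableEq n]
    {A : Matrix n n ℝ} (hA : A.IsHermitian) {r : ℝ} (h : ∀ i, hA.eigenvalues i ≤ r)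
    (v : n → ℝ) : v ⬝ᵥ A *ᵥ v ≤ r * (v ⬝ᵥ v) := by
  have hle : A ≤ algebraMap ℝ _ r := le_algebraMap_of_spectrum_le (by
    rw [hA.spectrum_real_eq_range_eigenvalues]; rintro _ ⟨i, rfl⟩; exact h i) hA
  have := (Matrix.le_iff.mp hle).dotProduct_mulVec_nonneg v
  simp only [star_trivial, sub_mulVec, dotProduct_sub, Algebra.algebraMap_eq_smul_one, smul_mulVec,
    one_mulVec, dotProduct_smul, smul_eq_mul] at this
  linarith

theorem Matrix.mulVec_dotProduct_mulVec_le_of_eigenvalues_le {m p : ℕ}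
    (X : Matrix (Fin m) (Fin p) ℝ) (hH : ((m : ℝ)⁻¹ • (Xᵀ * X)).IsHermitian) {r : ℝ}
    (h : ∀ i, hH.eigenvalues i ≤ r) (v : Fin p → ℝ) : (X *ᵥ v) ⬝ᵥ (X *ᵥ v) ≤ m * r * (v ⬝ᵥ v) := by
  rcases Nat.eq_zero_or_pos m with rfl | hm
  · simp [dotProduct]
  have hle := dotProduct_mulVec_le_of_eigenvalues_le hH h v
  rw [smul_mulVec, dotProduct_smul, smul_eq_mul, ← mulVec_mulVec, dotProduct_mulVec,
    vecMul_transpose, inv_mul_le_iff₀ (by positivity), ← mul_assoc] at hle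
  exact hle

lemma mul_dotProduct_self_lt_of_abs_lt {p : ℕ} {c s : ℝ} (hc : 0 ≤ c) (hs : 0 < s)
    {d : Fin p → ℝ} (hd : ∀ k, |d k| < √(s / (c * p))) : c * (d ⬝ᵥ d) < s := by
  rcases Nat.eq_zero_or_pos p with rfl | hp
  · simpa [dotProduct] using hs
  rcases hc.eq_or_lt with rfl | hc
  · simpa using hs
  have hsq : ∀ k, d k * d k < s / (c * p) := fun k ↦ by
    simpa only [sq, abs_mul_abs_self] using (Real.lt_sqrt (abs_nonneg _)).1 (hd k)
  have hdd : d ⬝ᵥ d < p * (s / (c * p)) := by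
    simpa [dotProduct] using Finset.sum_lt_sum_of_nonempty
      (Finset.univ_nonempty_iff.mpr ⟨⟨0, hp⟩⟩) fun k _ ↦ hsq k
  calc c * (d ⬝ᵥ d) < c * (p * (s / (c * p))) := by gcongr
    _ = s := by field_simp

theorem kl_and_variance_small_of_coord_close (m p : ℕ) (X : Matrix (Fin m) (Fin p) ℝ)
    (σ2 ε dmax : ℝ) (hσ2 : 0 < σ2) (hε : 0 < ε)
    (hH : (((m : ℝ)⁻¹) • (Xᵀ * X)).IsHermitian)
    (hdmax : IsGreatest (Set.range hH.eigenvalues) dmax) (hdpos : 0 < dmax)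
    (β0 β : Fin p → ℝ)
    (hβ : ∀ k, |β0 k - β k| < Real.sqrt (2 * σ2 * ε / (m * p * dmax))) :
    (∫ y, Real.log (gaussDensity m (X.mulVec β0) σ2 y / gaussDensity m (X.mulVec β) σ2 y)
        ∂(gaussMeasure m (X.mulVec β0) σ2)) < ε ∧
    ProbabilityTheory.variance
        (fun y => Real.log
          (gaussDensity m (X.mulVec β0) σ2 y / gaussDensity m (X.mulVec β) σ2 y))
        (gaussMeasure m (X.mulVec β0) σ2) < 2 * ε := by
  have hS : ∑ i, ((X *ᵥ β0) i - (X *ᵥ β) i) ^ 2 < 2 * σ2 * ε := calc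
    _ = (X *ᵥ (β0 - β)) ⬝ᵥ (X *ᵥ (β0 - β)) := by simp [mulVec_sub, dotProduct, sq]
    _ ≤ m * dmax * ((β0 - β) ⬝ᵥ (β0 - β)) :=
      X.mulVec_dotProduct_mulVec_le_of_eigenvalues_le hH (fun i ↦ hdmax.2 ⟨i, rfl⟩) _
    _ < 2 * σ2 * ε := mul_dotProduct_self_lt_of_abs_lt (by positivity) (by positivity)
      fun k ↦ by simpa only [Pi.sub_apply, mul_right_comm _ (p : ℝ) dmax] using hβ k
  rw [integral_log_gaussDensity_div hσ2, variance_log_gaussDensity_div hσ2]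
  constructor
  · rw [div_lt_iff₀ (by positivity)]
    linarith
  · rw [div_lt_iff₀ hσ2]
    linarith
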